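/- Let Y_D have density f_D(y) = ½ φ_T(y | −6, −4, −5, 1/9) + ½ φ_T(y | 4, 6, 5, 1/9) (a mixture of truncated normals supported on [−6,−4] ∪ [4,6]) and Y_N have density f_N = φ_T(y | −2, 2, 0, 1/16) supported on [−2,2], with Y_D and Y_N independent. Then P(Y_D > Y_N) = 1/2, even though the supports of f_D and f_N are disjoint (so the affinity κ = 0). -/

import Mathlib

/-!
Almost surely `Y_N ∈ [-2, 2]` and `Y_D ∈ [-6, -4] ∪ [4, 6]`, so almost surely `Y_N < Y_D` holds
exactly when `Y_D ∈ [4, 6]`. That event carries the mixture weight `1/2` of the right component.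
-/

open MeasureTheory Real ProbabilityTheory

noncomputable def truncNormalPdf (a b mu s2 y : ℝ) : ℝ :=
  if y ∈ Set.Icc a b then
    Real.exp (-(y - mu) ^ 2 / (2 * s2)) /
      (∫ t in a..b, Real.exp (-(t - mu) ^ 2 / (2 * s2)))
  else 0

noncomputable def sepTrapfD (y : ℝ) : ℝ :=
  (1/2) * truncNormalPdf (-6) (-4) (-5) (1/9) y +
    (1/2) * truncNormalPdf 4 6 5 (1/9) y

noncomputable def sepTrapfN (y : ℝ) : ℝ :=
  truncNormalPdf (-2) 2 0 (1/16) y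

section TruncNormal

variable {a b mu s2 : ℝ}

lemma continuous_gaussianKernel (mu s2 : ℝ) :
    Continuous fun t : ℝ => Real.exp (-(t - mu) ^ 2 / (2 * s2)) := by
  fun_prop

lemma measurable_truncNormalPdf (a b mu s2 : ℝ) : Measurable (truncNormalPdf a b mu s2) :=
  Measurable.ite measurableSet_Icc
    ((continuous_gaussianKernel mu s2).measurable.div_const _) measurable_const

lemma truncNormalPdf_of_notMem {y : ℝ} (hy : y ∉ Set.Icc a b) : truncNormalPdf a b mu s2 y = 0 :=
  if_neg hy

lemma setLIntegral_truncNormalPdf (hab : a < b) :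
    ∫⁻ y in Set.Icc a b, ENNReal.ofReal (truncNormalPdf a b mu s2 y) = 1 := by
  set g : ℝ → ℝ := fun t => Real.exp (-(t - mu) ^ 2 / (2 * s2))
  set Z := ∫ t in a..b, g t
  have hZ : 0 < Z := intervalIntegral.intervalIntegral_pos_of_pos_on
    ((continuous_gaussianKernel mu s2).intervalIntegrable a b) (fun _ _ => Real.exp_pos _) hab
  have hpdf : ∀ y ∈ Set.Icc a b,
      ENNReal.ofReal (truncNormalPdf a b mu s2 y) = ENNReal.ofReal (g y / Z) :=
    fun y hy => by rw [truncNormalPdf, if_pos hy]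
  rw [setLIntegral_congr_fun measurableSet_Icc hpdf,
    ← ofReal_integral_eq_lintegral_ofReal
      ((continuous_gaussianKernel mu s2).div_const Z).integrableOn_Icc
      (Filter.Eventually.of_forall fun y => by positivity),
    integral_Icc_eq_integral_Ioc, ← intervalIntegral.integral_of_le hab.le,
    intervalIntegral.integral_div, div_self hZ.ne', ENNReal.ofReal_one]

end TruncNormal

lemma ae_mem_of_map_eq_withDensity {Ω : Type*} [MeasurableSpace Ω] {P : Measure Ω}
    {X : Ω → ℝ} {f : ℝ → ℝ} {S : Set ℝ} (hX : Measurable X) (hf : Measurable f)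
    (hlaw : Measure.map X P = volume.withDensity (fun y => ENNReal.ofReal (f y)))
    (hfS : ∀ y ∉ S, f y = 0) :
    ∀ᵐ ω ∂P, X ω ∈ S := by
  refine ae_of_ae_map hX.aemeasurable ?_
  rw [hlaw, ae_withDensity_iff hf.ennreal_ofReal]
  refine Filter.Eventually.of_forall fun y hy => ?_
  by_contra hyS
  exact hy (by rw [hfS y hyS, ENNReal.ofReal_zero])

lemma measurable_sepTrapfD : Measurable sepTrapfD :=
  ((measurable_truncNormalPdf _ _ _ _).const_mul _).add
    ((measurable_truncNormalPdf _ _ _ _).const_mul _)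

lemma sepTrapfD_of_notMem {y : ℝ} (hy : y ∉ Set.Icc (-6) (-4) ∪ Set.Icc 4 6) :
    sepTrapfD y = 0 := by
  rw [Set.mem_union, not_or] at hy
  simp [sepTrapfD, truncNormalPdf_of_notMem hy.1, truncNormalPdf_of_notMem hy.2]

lemma sepTrapfN_of_notMem {y : ℝ} (hy : y ∉ Set.Icc (-2) 2) : sepTrapfN y = 0 :=
  truncNormalPdf_of_notMem hy

lemma setLIntegral_sepTrapfD_Icc_four_six :
    ∫⁻ y in Set.Icc 4 6, ENNReal.ofReal (sepTrapfD y) = 1 / 2 := by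
  have hright : ∀ y ∈ Set.Icc (4 : ℝ) 6, ENNReal.ofReal (sepTrapfD y) =
      ENNReal.ofReal (1 / 2) * ENNReal.ofReal (truncNormalPdf 4 6 5 (1 / 9) y) := by
    intro y hy
    have hleft : y ∉ Set.Icc (-6 : ℝ) (-4) := fun h => by linarith [h.2, hy.1]
    rw [sepTrapfD, truncNormalPdf_of_notMem hleft, mul_zero, zero_add,
      ENNReal.ofReal_mul (by norm_num)]
  rw [setLIntegral_congr_fun measurableSet_Icc hright, lintegral_const_mul _
      ((measurable_truncNormalPdf _ _ _ _).ennreal_ofReal),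
    setLIntegral_truncNormalPdf (by norm_num), mul_one, ENNReal.ofReal_div_of_pos two_pos]
  simp

theorem separation_trap_AUC_half_general
    {Ω : Type*} [MeasurableSpace Ω] (P : Measure Ω)
    (YD YN : Ω → ℝ) (hYD : Measurable YD) (hYN : Measurable YN)
    (hlawD : Measure.map YD P = volume.withDensity (fun y => ENNReal.ofReal (sepTrapfD y)))
    (hlawN : Measure.map YN P = volume.withDensity (fun y => ENNReal.ofReal (sepTrapfN y))) :
    P {ω | YN ω < YD ω} = 1/2 := by
  have hD := ae_mem_of_map_eq_withDensity hYD measurable_sepTrapfD hlawD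
    fun _ => sepTrapfD_of_notMem
  have hN := ae_mem_of_map_eq_withDensity hYN (measurable_truncNormalPdf _ _ _ _) hlawN
    fun _ => sepTrapfN_of_notMem
  have hevent : {ω | YN ω < YD ω} =ᵐ[P] YD ⁻¹' Set.Icc 4 6 := by
    refine Filter.eventuallyEq_set.mpr ?_
    filter_upwards [hD, hN] with ω hd ⟨hn₁, hn₂⟩
    rcases hd with ⟨_, hd₂⟩ | hd
    · exact iff_of_false (fun h : YN ω < YD ω => by linarith) fun h => by linarith [h.1]
    · exact iff_of_true (show YN ω < YD ω by linarith [hd.1]) hd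
  rw [measure_congr hevent, ← Measure.map_apply hYD measurableSet_Icc, hlawD,
    withDensity_apply _ measurableSet_Icc, setLIntegral_sepTrapfD_Icc_four_six]

theorem separation_trap_AUC_half
    {Ω : Type*} [MeasurableSpace Ω] (P : Measure Ω) [IsProbabilityMeasure P]
    (YD YN : Ω → ℝ) (hYD : Measurable YD) (hYN : Measurable YN)
    (hindep : IndepFun YD YN P)
    (hlawD : Measure.map YD P = volume.withDensity (fun y => ENNReal.ofReal (sepTrapfD y)))
    (hlawN : Measure.map YN P = volume.withDensity (fun y => ENNReal.ofReal (sepTrapfN y))) :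
    P {ω | YN ω < YD ω} = 1/2 :=
  separation_trap_AUC_half_general P YD YN hYD hYN hlawD hlawN
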